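/- arXiv:2108.02013 — 3 statements merged into one kernel-verified Lean document; each statement's English description precedes it below -/
import Mathlib

section
/- Let f and g be analytic at λ₀ with f(λ₀) ≠ 0 and g having a zero of order 2 at λ₀. Then the regularized limit of f/g at λ₀ equals f''(λ₀)/g''(λ₀) − (2/3) f'(λ₀)g'''(λ₀)/(g''(λ₀))² + f(λ₀)(4(g'''(λ₀))² − 3g''(λ₀)g''''(λ₀))/(18(g''(λ₀))³). -/
/-!
Write `g = (z - z₀)² h` with `h = dslope (dslope g z₀) z₀` analytic; comparing Taylor
coefficients gives `g'' = 2h`, `g''' = 6h'`, `g'''' = 12h''` at `z₀`, so `h z₀ ≠ 0` and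
`φ = f / h` is analytic at `z₀`. Then `f / g = φ / (z - z₀)²`, whose Laurent expansion is the
Taylor expansion of `φ` shifted by two, and Laurent coefficients are unique (each one is a circle
integral), so `c 0 = φ''(z₀) / 2`. Expanding `φ''` through `f = φ h` gives the formula.
-/

open Filter Topology

open Metric Complex Real

section

open scoped Nat

theorem hasSum_circleIntegral_of_norm_le {ι E : Type*} [Countable ι] [NormedAddCommGroup E]
    [NormedSpace ℂ E] {F : ι → ℂ → E} {G : ℂ → E} {c : ℂ} {R : ℝ} (bound : ι → ℝ)
    (hF : ∀ i, ContinuousOn (F i) (sphere c |R|))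
    (hF_le : ∀ i, ∀ z ∈ sphere c |R|, ‖F i z‖ ≤ bound i) (h_bound : Summable bound)
    (h_lim : ∀ z ∈ sphere c |R|, HasSum (fun i => F i z) (G z)) :
    HasSum (fun i => ∮ z in C(c, R), F i z) (∮ z in C(c, R), G z) := by
  refine intervalIntegral.hasSum_integral_of_dominated_convergence (fun i _ => |R| * bound i)
    (fun i => ?_) (fun i => ?_) (.of_forall fun _ _ => h_bound.mul_left _)
    intervalIntegrable_const
    (.of_forall fun θ _ => (h_lim _ (circleMap_mem_sphere' c R θ)).const_smul _)
  · simp only [deriv_circleMap]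
    exact (((continuous_circleMap 0 R).mul continuous_const).smul
      ((hF i).comp_continuous (continuous_circleMap c R)
        (circleMap_mem_sphere' c R))).aestronglyMeasurable
  · refine .of_forall fun θ _ => ?_
    rw [norm_smul, deriv_circleMap, norm_mul, norm_circleMap_zero, norm_I, mul_one]
    exact mul_le_mul_of_nonneg_left (hF_le i _ (circleMap_mem_sphere' c R θ)) (abs_nonneg R)

theorem circleIntegral_sub_zpow_mul_eq_of_hasSum {F : ℂ → ℂ} {c : ℤ → ℂ} {z₀ : ℂ} {ρ : ℝ}
    (hρ : 0 < ρ) (hc : ∀ z ∈ sphere z₀ ρ, HasSum (fun k : ℤ => c k * (z - z₀) ^ k) (F z))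
    (n : ℤ) : (∮ z in C(z₀, ρ), (z - z₀) ^ (-n - 1) * F z) = 2 * π * I * c n := by
  have hsphere : sphere z₀ |ρ| = sphere z₀ ρ := by rw [abs_of_pos hρ]
  have hne : ∀ z ∈ sphere z₀ ρ, z - z₀ ≠ 0 := fun z hz =>
    sub_ne_zero.2 (ne_of_mem_sphere hz hρ.ne')
  have hnorm : ∀ z ∈ sphere z₀ ρ, ‖z - z₀‖ = ρ := fun z hz => by rwa [← dist_eq_norm]
  have hterm (k : ℤ) : (∮ z in C(z₀, ρ), (z - z₀) ^ (-n - 1) * (c k * (z - z₀) ^ k)) =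
      if k = n then 2 * π * I * c n else 0 := by
    rw [circleIntegral.integral_congr hρ.le (g := fun z => c k * (z - z₀) ^ (k - n - 1)),
      circleIntegral.integral_const_mul]
    · split_ifs with hk
      · simp_rw [hk, sub_self, zero_sub, zpow_neg_one]
        rw [circleIntegral.integral_sub_inv_of_mem_ball (mem_ball_self hρ), mul_comm]
      · rw [circleIntegral.integral_sub_zpow_of_ne (by omega), mul_zero]
    · intro z hz
      dsimp only
      rw [show k - n - 1 = (-n - 1) + k by ring, zpow_add₀ (hne z hz)]
      ring
  have hsum : Summable fun k => ‖c k‖ * ρ ^ k := by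
    have hz : z₀ + ρ ∈ sphere z₀ ρ := by simp [abs_of_pos hρ]
    convert (hc _ hz).summable.norm using 2 with k
    rw [norm_mul, norm_zpow, hnorm _ hz]
  have := hasSum_circleIntegral_of_norm_le (R := ρ)
    (F := fun k z => (z - z₀) ^ (-n - 1) * (c k * (z - z₀) ^ k))
    (fun k => ρ ^ (-n - 1) * (‖c k‖ * ρ ^ k)) (fun k => ?_) (fun k z hz => ?_)
    (hsum.mul_left _) (fun z hz => (hc z (hsphere ▸ hz)).mul_left _)
  · simp only [hterm] at this
    exact this.unique (hasSum_ite_eq n _)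
  · have hcont : ContinuousOn (fun z => z - z₀) (sphere z₀ ρ) :=
      continuousOn_id.sub continuousOn_const
    rw [hsphere]
    exact (hcont.zpow₀ _ fun z hz => .inl (hne z hz)).mul
      (continuousOn_const.mul (hcont.zpow₀ _ fun z hz => .inl (hne z hz)))
  · rw [hsphere] at hz
    simp [norm_zpow, hnorm z hz]

theorem eq_of_eventually_hasSum_laurent {F : ℂ → ℂ} {c d : ℤ → ℂ} {z₀ : ℂ}
    (hc : ∀ᶠ z in 𝓝[≠] z₀, HasSum (fun k : ℤ => c k * (z - z₀) ^ k) (F z))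
    (hd : ∀ᶠ z in 𝓝[≠] z₀, HasSum (fun k : ℤ => d k * (z - z₀) ^ k) (F z)) : c = d := by
  obtain ⟨ε, hε, hball⟩ :=
    Metric.eventually_nhds_iff.1 (eventually_nhdsWithin_iff.1 (hc.and hd))
  have hsphere : ∀ z ∈ sphere z₀ (ε / 2), _ := fun z hz =>
    hball (by rw [mem_sphere.1 hz]; linarith) (ne_of_mem_sphere hz (by positivity))
  funext n
  have h2πI : (2 * π * I : ℂ) ≠ 0 := by simp [pi_ne_zero, I_ne_zero]
  refine mul_left_cancel₀ h2πI ?_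
  rw [← circleIntegral_sub_zpow_mul_eq_of_hasSum (half_pos hε) (fun z hz => (hsphere z hz).1),
    ← circleIntegral_sub_zpow_mul_eq_of_hasSum (half_pos hε) (fun z hz => (hsphere z hz).2)]

variable {𝕜 : Type*} [NontriviallyNormedField 𝕜]

theorem AnalyticAt.dslope {E : Type*} [NormedAddCommGroup E] [NormedSpace 𝕜 E] {f : 𝕜 → E}
    {z₀ : 𝕜} (hf : AnalyticAt 𝕜 f z₀) : AnalyticAt 𝕜 (dslope f z₀) z₀ :=
  let ⟨_, hp⟩ := hf
  ⟨_, hp.has_fpower_series_dslope_fslope⟩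

theorem sub_sq_smul_dslope_dslope {E : Type*} [NormedAddCommGroup E] [NormedSpace 𝕜 E]
    {g : 𝕜 → E} {z₀ : 𝕜} (hg0 : g z₀ = 0) (hg1 : deriv g z₀ = 0) (z : 𝕜) :
    (z - z₀) ^ 2 • dslope (dslope g z₀) z₀ z = g z := by
  rw [pow_two, mul_smul, sub_smul_dslope, dslope_same, hg1, sub_zero, sub_smul_dslope, hg0,
    sub_zero]

theorem iteratedDeriv_two_fun_mul {u v : 𝕜 → 𝕜} {x : 𝕜} (hu : ContDiffAt 𝕜 2 u x)
    (hv : ContDiffAt 𝕜 2 v x) :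
    iteratedDeriv 2 (fun y => u y * v y) x =
      iteratedDeriv 2 u x * v x + 2 * (deriv u x * deriv v x) + u x * iteratedDeriv 2 v x := by
  rw [iteratedDeriv_fun_mul hu hv]
  simp [Finset.sum_range_succ]
  ring

variable [CompleteSpace 𝕜] [CharZero 𝕜]

theorem iteratedDeriv_succ_eq_mul_iteratedDeriv_dslope {f : 𝕜 → 𝕜} {z₀ : 𝕜}
    (hf : AnalyticAt 𝕜 f z₀) (n : ℕ) :
    iteratedDeriv (n + 1) f z₀ = (n + 1) * iteratedDeriv n (dslope f z₀) z₀ := by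
  have hslope := hf.hasFPowerSeriesAt.has_fpower_series_dslope_fslope
  have hcoeff := congrArg (fun p => p.coeff n)
    (hslope.eq_formalMultilinearSeries hf.dslope.hasFPowerSeriesAt)
  simp only [FormalMultilinearSeries.coeff_fslope, FormalMultilinearSeries.coeff_ofScalars,
    Nat.factorial_succ, Nat.cast_mul] at hcoeff
  have : (n ! : 𝕜) ≠ 0 := Nat.cast_ne_zero.2 n.factorial_ne_zero
  field_simp at hcoeff
  push_cast at hcoeff ⊢
  linear_combination hcoeff

theorem iteratedDeriv_add_two_eq_mul_iteratedDeriv_dslope_dslope {f : 𝕜 → 𝕜} {z₀ : 𝕜}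
    (hf : AnalyticAt 𝕜 f z₀) (n : ℕ) :
    iteratedDeriv (n + 2) f z₀ =
      (n + 1) * (n + 2) * iteratedDeriv n (dslope (dslope f z₀) z₀) z₀ := by
  rw [iteratedDeriv_succ_eq_mul_iteratedDeriv_dslope hf,
    iteratedDeriv_succ_eq_mul_iteratedDeriv_dslope hf.dslope]
  push_cast
  ring

theorem Function.extend_natCast_sub_apply {α : Type*} [Zero α] (a : ℕ → α) (m n : ℕ) :
    Function.extend (fun n : ℕ => (n : ℤ) - m) a 0 (n - m) = a n :=
  (sub_left_injective.comp Nat.cast_injective).extend_apply _ _ n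

theorem AnalyticAt.eventually_hasSum_laurent_div_sub_pow {f : 𝕜 → 𝕜} {z₀ : 𝕜}
    (hf : AnalyticAt 𝕜 f z₀) (m : ℕ) :
    ∀ᶠ z in 𝓝[≠] z₀, HasSum (fun k : ℤ => Function.extend (fun n : ℕ => (n : ℤ) - m)
      (fun n => iteratedDeriv n f z₀ / n !) 0 k * (z - z₀) ^ k) (f z / (z - z₀) ^ m) := by
  have hinj : Function.Injective fun n : ℕ => (n : ℤ) - m :=
    sub_left_injective.comp Nat.cast_injective
  filter_upwards [self_mem_nhdsWithin,
    nhdsWithin_le_nhds hf.hasFPowerSeriesAt.eventually_hasSum_sub] with z hz hsum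
  simp only [FormalMultilinearSeries.ofScalars_apply_eq, smul_eq_mul] at hsum
  refine (hinj.hasSum_iff fun k hk => ?_).1 ?_
  · rw [Function.extend_apply' _ _ _ fun ⟨n, hn⟩ => hk ⟨n, hn⟩, Pi.zero_apply, zero_mul]
  · convert hsum.div_const ((z - z₀) ^ m) using 1
    funext n
    simp only [Function.comp_apply, Function.extend_natCast_sub_apply]
    rw [zpow_sub₀ (sub_ne_zero.2 hz), zpow_natCast, zpow_natCast, mul_div_assoc]

theorem coeff_eq_of_eventually_hasSum_laurent_div_sub_pow {f : ℂ → ℂ} {c : ℤ → ℂ} {z₀ : ℂ}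
    (hf : AnalyticAt ℂ f z₀) {m : ℕ}
    (hc : ∀ᶠ z in 𝓝[≠] z₀, HasSum (fun k : ℤ => c k * (z - z₀) ^ k) (f z / (z - z₀) ^ m))
    (n : ℕ) : c (n - m) = iteratedDeriv n f z₀ / n ! := by
  rw [eq_of_eventually_hasSum_laurent hc (hf.eventually_hasSum_laurent_div_sub_pow m),
    Function.extend_natCast_sub_apply]

end

theorem regularized_limit_double_pole_general (f g : ℂ → ℂ) (z₀ : ℂ)
    (hf : AnalyticAt ℂ f z₀) (hg : AnalyticAt ℂ g z₀)
    (hg0 : g z₀ = 0) (hg1 : deriv g z₀ = 0)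
    (hg2 : iteratedDeriv 2 g z₀ ≠ 0)
    (r : ℝ) (hr : 0 < r) (c : ℤ → ℂ)
    (hc : ∀ lam : ℂ, lam ≠ z₀ → ‖lam - z₀‖ < r →
      HasSum (fun k : ℤ => c k * (lam - z₀) ^ k) (f lam / g lam)) :
    c 0 = iteratedDeriv 2 f z₀ / iteratedDeriv 2 g z₀ -
      (2 / 3) * (deriv f z₀ * iteratedDeriv 3 g z₀) / (iteratedDeriv 2 g z₀) ^ 2 +
      f z₀ * (4 * (iteratedDeriv 3 g z₀) ^ 2 -
          3 * iteratedDeriv 2 g z₀ * iteratedDeriv 4 g z₀) /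
        (18 * (iteratedDeriv 2 g z₀) ^ 3) := by
  obtain ⟨h, hh, hgh, hgh_eq⟩ : ∃ h : ℂ → ℂ, AnalyticAt ℂ h z₀ ∧
      (∀ n : ℕ, iteratedDeriv (n + 2) g z₀ = (n + 1) * (n + 2) * iteratedDeriv n h z₀) ∧
      ∀ z, (z - z₀) ^ 2 * h z = g z :=
    ⟨_, hg.dslope.dslope, iteratedDeriv_add_two_eq_mul_iteratedDeriv_dslope_dslope hg,
      sub_sq_smul_dslope_dslope hg0 hg1⟩
  have hg2h : iteratedDeriv 2 g z₀ = 2 * h z₀ := by simpa using hgh 0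
  have hg3h : iteratedDeriv 3 g z₀ = 6 * deriv h z₀ := by
    rw [← iteratedDeriv_one]
    linear_combination hgh 1
  have hg4h : iteratedDeriv 4 g z₀ = 12 * iteratedDeriv 2 h z₀ := by linear_combination hgh 2
  have hh0 : h z₀ ≠ 0 := fun h0 => hg2 (by rw [hg2h, h0, mul_zero])
  set φ := fun z => f z / h z
  have hφ : AnalyticAt ℂ φ z₀ := hf.div hh hh0
  have hfφ : f =ᶠ[𝓝 z₀] fun z => φ z * h z := by
    filter_upwards [hh.continuousAt.eventually_ne hh0] with z hz
    exact (div_mul_cancel₀ _ hz).symm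
  have hf1 := hfφ.deriv_eq.trans (deriv_fun_mul hφ.differentiableAt hh.differentiableAt)
  have hf2 := (hfφ.iteratedDeriv_eq 2).trans
    (iteratedDeriv_two_fun_mul hφ.contDiffAt hh.contDiffAt)
  have hc' : ∀ᶠ z in 𝓝[≠] z₀,
      HasSum (fun k : ℤ => c k * (z - z₀) ^ k) (φ z / (z - z₀) ^ 2) := by
    filter_upwards [self_mem_nhdsWithin, nhdsWithin_le_nhds (ball_mem_nhds z₀ hr)] with z hz hzr
    rw [div_div, mul_comm, hgh_eq]
    exact hc z hz (by rwa [mem_ball, dist_eq_norm] at hzr)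
  have hc0 : c 0 = iteratedDeriv 2 φ z₀ / 2 := by
    simpa using coeff_eq_of_eventually_hasSum_laurent_div_sub_pow hφ hc' 2
  rw [hc0, hf2, hf1, hfφ.eq_of_nhds, hg2h, hg3h, hg4h]
  field_simp
  ring

/-- Let `f` and `g` be analytic at `z₀` with `f z₀ ≠ 0` and `g` having a
zero of order 2 at `z₀`. Then the regularized limit of `f/g` at `z₀` (the constant
Laurent coefficient `c 0` of `f/g` there) equals
`f''/g'' − (2/3) f' g'''/(g'')² + f (4(g''')² − 3 g'' g'''')/(18 (g'')³)`,
all derivatives evaluated at `z₀`. -/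
theorem regularized_limit_double_pole (f g : ℂ → ℂ) (z₀ : ℂ)
    (hf : AnalyticAt ℂ f z₀) (hg : AnalyticAt ℂ g z₀)
    (hf0 : f z₀ ≠ 0) (hg0 : g z₀ = 0) (hg1 : deriv g z₀ = 0)
    (hg2 : iteratedDeriv 2 g z₀ ≠ 0)
    (r : ℝ) (hr : 0 < r) (c : ℤ → ℂ)
    (hc : ∀ lam : ℂ, lam ≠ z₀ → ‖lam - z₀‖ < r →
      HasSum (fun k : ℤ => c k * (lam - z₀) ^ k) (f lam / g lam)) :
    c 0 = iteratedDeriv 2 f z₀ / iteratedDeriv 2 g z₀ -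
      (2 / 3) * (deriv f z₀ * iteratedDeriv 3 g z₀) / (iteratedDeriv 2 g z₀) ^ 2 +
      f z₀ * (4 * (iteratedDeriv 3 g z₀) ^ 2 -
          3 * iteratedDeriv 2 g z₀ * iteratedDeriv 4 g z₀) /
        (18 * (iteratedDeriv 2 g z₀) ^ 3) :=
  regularized_limit_double_pole_general f g z₀ hf hg hg0 hg1 hg2 r hr c hc
end

section
/- Let k : [0,a] → ℂ be the restriction of a function analytic on a neighborhood of [0,a] with Taylor expansion k(t) = Σ_{l≥0} a_l t^l valid for |t| < ρ₀, and let λ ∈ ℂ with λ ∉ ℤ. Then for every 0 < ε < min(ρ₀, a), the quantity ∫_ε^a k(t) t^{-λ} dt + Σ_{l=0}^{∞} a_l ε^{l-λ+1}/(l-λ+1) is independent of ε. -/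
/-!
Below `ρ₀` the function `F(ε) = ∑ₗ Aₗ ε^(l-λ+1)/(l-λ+1)` is a primitive of `k(t) t^(-λ)`:
integrating the Taylor series of `k` term by term over `[ε₁, ε₂] ⊂ (0, ρ₀)` (dominated
convergence, with the terms bounded by `‖Aₗ‖ max(ε₁,ε₂)^l` times a bound for `t^(-λ)`) gives
`∫_{ε₁}^{ε₂} k(t) t^(-λ) dt = F(ε₂) - F(ε₁)`, which is the claim after splitting `∫_{ε₁}^a`
at `ε₂`. Since `λ ∉ ℤ`, no exponent `l - λ` equals `-1`.
-/

open MeasureTheory Complex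

theorem natCast_sub_add_one_ne_zero {lam : ℂ} (hlam : ∀ m : ℤ, lam ≠ (m : ℂ)) (l : ℕ) :
    (l : ℂ) - lam + 1 ≠ 0 := by
  intro h
  apply hlam ((l : ℤ) + 1)
  push_cast
  linear_combination -h

theorem summable_norm_mul_pow_of_hasSum {A : ℕ → ℂ} {r : ℝ} {y : ℂ} (hr : 0 ≤ r)
    (h : HasSum (fun l => A l * (r : ℂ) ^ l) y) : Summable fun l => ‖A l‖ * r ^ l := by
  refine (summable_norm_iff.mpr h.summable).congr fun l => ?_
  rw [norm_mul, norm_pow, norm_real, Real.norm_of_nonneg hr]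

theorem summable_mul_ofReal_cpow_div {A : ℕ → ℂ} {ε : ℝ} (lam : ℂ) (hε : 0 < ε)
    (hA : Summable fun l => ‖A l‖ * ε ^ l) :
    Summable fun l : ℕ => A l * (ε : ℂ) ^ ((l : ℂ) - lam + 1) / ((l : ℂ) - lam + 1) := by
  refine Summable.of_norm_bounded_eventually (hA.mul_right ‖(ε : ℂ) ^ (1 - lam)‖) ?_
  rw [Nat.cofinite_eq_atTop]
  filter_upwards [tendsto_natCast_atTop_atTop.eventually_ge_atTop lam.re] with l hl
  have hden : 1 ≤ ‖(l : ℂ) - lam + 1‖ :=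
    calc (1 : ℝ) ≤ ((l : ℂ) - lam + 1).re := by simpa using hl
      _ ≤ _ := re_le_norm _
  have hsplit : (ε : ℂ) ^ ((l : ℂ) - lam + 1) = (ε : ℂ) ^ l * (ε : ℂ) ^ (1 - lam) := by
    rw [← cpow_natCast, ← cpow_add _ _ (ofReal_ne_zero.mpr hε.ne')]
    ring_nf
  rw [hsplit, norm_div, norm_mul, norm_mul, norm_pow, norm_real, Real.norm_of_nonneg hε.le,
    ← mul_assoc]
  exact div_le_self (by positivity) hden

theorem intervalIntegral_pow_mul_cpow {a b : ℝ} (h0 : (0 : ℝ) ∉ Set.uIcc a b) (l : ℕ) {lam : ℂ}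
    (hl : (l : ℂ) - lam + 1 ≠ 0) :
    ∫ t in a..b, (t : ℂ) ^ l * (t : ℂ) ^ (-lam) =
      ((b : ℂ) ^ ((l : ℂ) - lam + 1) - (a : ℂ) ^ ((l : ℂ) - lam + 1)) / ((l : ℂ) - lam + 1) := by
  have hne : (l : ℂ) - lam ≠ -1 := fun h => hl (by linear_combination h)
  rw [← integral_cpow (Or.inr ⟨hne, h0⟩)]
  refine intervalIntegral.integral_congr fun t ht => ?_
  have ht : (t : ℂ) ≠ 0 := ofReal_ne_zero.mpr (ne_of_mem_of_not_mem ht h0)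
  rw [← cpow_natCast, ← cpow_add _ _ ht, sub_eq_add_neg]

theorem hasSum_intervalIntegral_mul_pow_mul_cpow {A : ℕ → ℂ} {g : ℝ → ℂ} {a b : ℝ} (s : ℂ)
    (ha : 0 < a) (hb : 0 < b)
    (hg : ∀ t ∈ Set.uIcc a b, HasSum (fun l => A l * (t : ℂ) ^ l) (g t))
    (hA : Summable fun l => ‖A l‖ * max a b ^ l) :
    HasSum (fun l => ∫ t in a..b, A l * (t : ℂ) ^ l * (t : ℂ) ^ s)
      (∫ t in a..b, g t * (t : ℂ) ^ s) := by
  have h0 : (0 : ℝ) ∉ Set.uIcc a b := Set.notMem_uIcc_of_lt ha hb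
  have hcpow : ContinuousOn (fun t : ℝ => (t : ℂ) ^ s) (Set.uIcc a b) := fun t ht =>
    (continuousAt_ofReal_cpow_const t s (Or.inr (ne_of_mem_of_not_mem ht h0))).continuousWithinAt
  obtain ⟨M, hM⟩ := isCompact_uIcc.exists_bound_of_continuousOn hcpow
  refine intervalIntegral.hasSum_integral_of_dominated_convergence
    (fun l _ => ‖A l‖ * max a b ^ l * M) (fun l => ?_) (fun l => ae_of_all _ fun t ht => ?_)
    (ae_of_all _ fun _ _ => hA.mul_right M) intervalIntegrable_const
    (ae_of_all _ fun t ht => (hg t (Set.uIoc_subset_uIcc ht)).mul_right _)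
  · exact ((continuousOn_const.mul (continuous_ofReal.pow l).continuousOn).mul
      hcpow).intervalIntegrable.def'.aestronglyMeasurable
  · have ht := Set.uIoc_subset_uIcc ht
    have hpos : 0 < t := lt_of_lt_of_le (lt_min ha hb) ht.1
    rw [norm_mul, norm_mul, norm_pow, norm_real, Real.norm_of_nonneg hpos.le]
    gcongr
    · exact ht.2
    · exact hM t ht

theorem hasSum_sub_mul_ofReal_cpow_div {A : ℕ → ℂ} {g : ℝ → ℂ} {a b : ℝ} {lam : ℂ}
    (hlam : ∀ m : ℤ, lam ≠ (m : ℂ)) (ha : 0 < a) (hb : 0 < b)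
    (hg : ∀ t ∈ Set.uIcc a b, HasSum (fun l => A l * (t : ℂ) ^ l) (g t))
    (hA : Summable fun l => ‖A l‖ * max a b ^ l) :
    HasSum (fun l : ℕ => A l * (b : ℂ) ^ ((l : ℂ) - lam + 1) / ((l : ℂ) - lam + 1) -
        A l * (a : ℂ) ^ ((l : ℂ) - lam + 1) / ((l : ℂ) - lam + 1))
      (∫ t in a..b, g t * (t : ℂ) ^ (-lam)) := by
  convert hasSum_intervalIntegral_mul_pow_mul_cpow (-lam) ha hb hg hA using 2 with l
  simp only [mul_assoc, intervalIntegral.integral_const_mul]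
  rw [intervalIntegral_pow_mul_cpow (Set.notMem_uIcc_of_lt ha hb) l
    (natCast_sub_add_one_ne_zero hlam l)]
  ring

theorem intervalIntegrable_mul_ofReal_cpow {k : ℂ → ℂ} {b c : ℝ} (s : ℂ)
    (h0 : (0 : ℝ) ∉ Set.uIcc b c) (hk : ∀ x ∈ Set.uIcc b c, ContinuousAt k (x : ℂ)) :
    IntervalIntegrable (fun t : ℝ => k (t : ℂ) * (t : ℂ) ^ s) volume b c :=
  ContinuousOn.intervalIntegrable fun t ht =>
    (((hk t ht).comp continuous_ofReal.continuousAt).mul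
      (continuousAt_ofReal_cpow_const t s (Or.inr (ne_of_mem_of_not_mem ht h0)))).continuousWithinAt

theorem finite_part_candidate_eps_independent_general (a ρ₀ : ℝ)
    (k : ℂ → ℂ) (A : ℕ → ℂ)
    (hk : ∀ x ∈ Set.Icc (0 : ℝ) a, AnalyticAt ℂ k (x : ℂ))
    (hA : ∀ z : ℂ, ‖z‖ < ρ₀ → HasSum (fun l : ℕ => A l * z ^ l) (k z))
    (lam : ℂ) (hlam : ∀ m : ℤ, lam ≠ (m : ℂ)) :
    ∀ ε₁ ε₂ : ℝ, 0 < ε₁ → ε₁ < min ρ₀ a → 0 < ε₂ → ε₂ < min ρ₀ a →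
      ((∫ t in ε₁..a, k (t : ℂ) * (t : ℂ) ^ (-lam)) +
          ∑' l : ℕ, A l * (ε₁ : ℂ) ^ ((l : ℂ) - lam + 1) / ((l : ℂ) - lam + 1)) =
        ((∫ t in ε₂..a, k (t : ℂ) * (t : ℂ) ^ (-lam)) +
          ∑' l : ℕ, A l * (ε₂ : ℂ) ^ ((l : ℂ) - lam + 1) / ((l : ℂ) - lam + 1)) := by
  intro ε₁ ε₂ h₁ h₁' h₂ h₂'
  rw [lt_min_iff] at h₁' h₂'
  have hA' (r : ℝ) (hr : 0 < r) (hrρ : r < ρ₀) : HasSum (fun l => A l * (r : ℂ) ^ l) (k r) :=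
    hA r (by rwa [norm_real, Real.norm_of_nonneg hr.le])
  have hint {b c : ℝ} (hb : 0 < b) (hc : 0 < c) (hba : b ≤ a) (hca : c ≤ a) :
      IntervalIntegrable (fun t : ℝ => k (t : ℂ) * (t : ℂ) ^ (-lam)) volume b c :=
    intervalIntegrable_mul_ofReal_cpow _ (Set.notMem_uIcc_of_lt hb hc) fun x hx =>
      (hk x (Set.uIcc_subset_Icc ⟨hb.le, hba⟩ ⟨hc.le, hca⟩ hx)).continuousAt
  have hmax : max ε₁ ε₂ < ρ₀ := max_lt h₁'.1 h₂'.1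
  have hdiff := hasSum_sub_mul_ofReal_cpow_div hlam h₁ h₂
    (fun t ht => hA' t (lt_of_lt_of_le (lt_min h₁ h₂) ht.1) (lt_of_le_of_lt ht.2 hmax))
    (summable_norm_mul_pow_of_hasSum (by positivity) (hA' _ (by positivity) hmax))
  have hS₁ := (summable_mul_ofReal_cpow_div lam h₁
    (summable_norm_mul_pow_of_hasSum h₁.le (hA' ε₁ h₁ h₁'.1))).hasSum
  have hS₂ := hdiff.add hS₁
  simp only [sub_add_cancel] at hS₂
  rw [hS₂.tsum_eq, ← intervalIntegral.integral_add_adjacent_intervals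
    (hint h₁ h₂ h₁'.2.le h₂'.2.le) (hint h₂ (h₂.trans h₂'.2) h₂'.2.le le_rfl)]
  ring

/-- Let `k` be (the restriction of) a function analytic at every point of
`[0,a]` with Taylor expansion `k(t) = Σ_{l≥0} A_l t^l` valid for `|t| < ρ₀`, and let
`lam ∈ ℂ` be a non-integer. Then for every `0 < ε < min ρ₀ a`, the quantity
`∫_ε^a k(t) t^{-lam} dt + Σ_{l=0}^{∞} A_l ε^{l-lam+1}/(l-lam+1)` is independent of `ε`. -/
theorem finite_part_candidate_eps_independent (a ρ₀ : ℝ) (ha : 0 < a) (hρ : 0 < ρ₀)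
    (k : ℂ → ℂ) (A : ℕ → ℂ)
    (hk : ∀ x ∈ Set.Icc (0 : ℝ) a, AnalyticAt ℂ k (x : ℂ))
    (hA : ∀ z : ℂ, ‖z‖ < ρ₀ → HasSum (fun l : ℕ => A l * z ^ l) (k z))
    (lam : ℂ) (hlam : ∀ m : ℤ, lam ≠ (m : ℂ)) :
    ∀ ε₁ ε₂ : ℝ, 0 < ε₁ → ε₁ < min ρ₀ a → 0 < ε₂ → ε₂ < min ρ₀ a →
      ((∫ t in ε₁..a, k (t : ℂ) * (t : ℂ) ^ (-lam)) +
          ∑' l : ℕ, A l * (ε₁ : ℂ) ^ ((l : ℂ) - lam + 1) / ((l : ℂ) - lam + 1)) =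
        ((∫ t in ε₂..a, k (t : ℂ) * (t : ℂ) ^ (-lam)) +
          ∑' l : ℕ, A l * (ε₂ : ℂ) ^ ((l : ℂ) - lam + 1) / ((l : ℂ) - lam + 1)) :=
  finite_part_candidate_eps_independent_general a ρ₀ k A hk hA lam hlam
end

section
/- The singular part Δ₁(ν,ω) = (π/(ω^ν sin(πν)))(π cot(πν) + Log ω) of the Stieltjes transform with a single logarithm satisfies reglim_{ν→0} Δ₁(ν,ω) = −(Log ω)²/2 − π²/6. -/
open Filter Topology

section AuxDeltaOne

open Asymptotics Bornology
open scoped ENNReal NNReal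

private lemma expTaylor (n : ℕ) (hn : 0 < n) :
    (fun z : ℂ => Complex.exp z - ∑ i ∈ Finset.range n, z ^ i / i.factorial)
      =O[𝓝 0] fun z => z ^ n := by
  apply IsBigO.of_bound ((n.succ : ℝ) * ((n.factorial : ℝ) * n)⁻¹)
  filter_upwards [Metric.ball_mem_nhds (0:ℂ) one_pos] with z hz
  simp only [Metric.mem_ball, dist_zero_right] at hz
  have h := Complex.exp_bound (x := z) (by simpa using hz.le) hn
  rw [norm_pow]
  calc ‖Complex.exp z - ∑ i ∈ Finset.range n, z ^ i / i.factorial‖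
      ≤ ‖z‖ ^ n * ((n.succ : ℝ) * ((n.factorial : ℝ) * n)⁻¹) := h
    _ = (n.succ : ℝ) * ((n.factorial : ℝ) * n)⁻¹ * ‖z‖ ^ n := by
        ring

private lemma pow_bigO_pow {a n : ℕ} (h : n ≤ a) :
    (fun z : ℂ => z ^ a) =O[𝓝 0] fun z => z ^ n := by
  apply IsBigO.of_bound 1
  filter_upwards [Metric.ball_mem_nhds (0:ℂ) one_pos] with z hz
  simp only [Metric.mem_ball, dist_zero_right] at hz
  rw [norm_pow, norm_pow, one_mul]
  exact pow_le_pow_of_le_one (norm_nonneg z) hz.le h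

private lemma expTaylorComp (a : ℂ) (n : ℕ) (hn : 0 < n) :
    (fun z : ℂ => Complex.exp (a * z) - ∑ i ∈ Finset.range n, (a * z) ^ i / i.factorial)
      =O[𝓝 0] fun z => z ^ n := by
  have hmap : Tendsto (fun z : ℂ => a * z) (𝓝 0) (𝓝 0) := by
    simpa using (tendsto_id (x := 𝓝 (0:ℂ))).const_mul a
  have h := (expTaylor n hn).comp_tendsto hmap
  refine h.trans ?_
  have : (fun z : ℂ => (a * z) ^ n) = fun z => a ^ n * z ^ n := by
    funext z; ring
  rw [Function.comp_def]
  simp only [this]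
  exact (isBigO_refl (fun z : ℂ => z ^ n) (𝓝 0)).const_mul_left _

private lemma expQuad (L : ℂ) :
    (fun ν : ℂ => Complex.exp (-(L * ν)) - (1 - L * ν + L ^ 2 * ν ^ 2 / 2))
      =O[𝓝 0] fun ν => ν ^ 3 := by
  have h := expTaylorComp (-L) 3 (by norm_num)
  refine (h.congr_left fun ν => ?_)
  rw [Finset.sum_range_succ, Finset.sum_range_succ, Finset.sum_range_one]
  norm_num
  ring_nf

private lemma sinTaylor4 :
    (fun z : ℂ => Complex.sin z - (z - z ^ 3 / 6)) =O[𝓝 0] fun z => z ^ 4 := by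
  have h1 := expTaylorComp (-Complex.I) 4 (by norm_num)
  have h2 := expTaylorComp Complex.I 4 (by norm_num)
  have key : (fun z : ℂ => Complex.sin z - (z - z ^ 3 / 6)) = fun z =>
      ((Complex.exp (-Complex.I * z) - ∑ i ∈ Finset.range 4, (-Complex.I * z) ^ i / i.factorial)
        - (Complex.exp (Complex.I * z) - ∑ i ∈ Finset.range 4, (Complex.I * z) ^ i / i.factorial))
        * Complex.I / 2 := by
    funext z
    rw [Complex.sin]
    rw [show -z * Complex.I = -Complex.I * z by ring, show z * Complex.I = Complex.I * z by ring]
    simp only [Finset.sum_range_succ, Finset.sum_range_one]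
    norm_num [Nat.factorial]
    ring_nf
    simp [Complex.I_sq, pow_succ]
    ring_nf
  rw [key]
  have h3 := (h1.sub h2).const_mul_left (Complex.I / 2)
  refine h3.congr_left fun z => by ring

private lemma cosTaylor4 :
    (fun z : ℂ => Complex.cos z - (1 - z ^ 2 / 2)) =O[𝓝 0] fun z => z ^ 4 := by
  have h1 := expTaylorComp (-Complex.I) 4 (by norm_num)
  have h2 := expTaylorComp Complex.I 4 (by norm_num)
  have key : (fun z : ℂ => Complex.cos z - (1 - z ^ 2 / 2)) = fun z =>
      ((Complex.exp (Complex.I * z) - ∑ i ∈ Finset.range 4, (Complex.I * z) ^ i / i.factorial)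
        + (Complex.exp (-Complex.I * z) - ∑ i ∈ Finset.range 4, (-Complex.I * z) ^ i / i.factorial))
        / 2 := by
    funext z
    rw [Complex.cos]
    rw [show -z * Complex.I = -Complex.I * z by ring, show z * Complex.I = Complex.I * z by ring]
    simp only [Finset.sum_range_succ, Finset.sum_range_one]
    norm_num [Nat.factorial]
    ring_nf
    simp [Complex.I_sq, pow_succ]
    ring_nf
  rw [key]
  have h3 := (h2.add h1).const_mul_left (1 / 2)
  refine h3.congr_left fun z => by ring

private lemma compScale {f : ℂ → ℂ} {n : ℕ} (a : ℂ) (h : f =O[𝓝 0] fun z => z ^ n) :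
    (fun ν : ℂ => f (a * ν)) =O[𝓝 0] fun ν => ν ^ n := by
  have hmap : Tendsto (fun ν : ℂ => a * ν) (𝓝 0) (𝓝 0) := by
    simpa using (tendsto_id (x := 𝓝 (0:ℂ))).const_mul a
  refine (h.comp_tendsto hmap).trans ?_
  rw [Function.comp_def]
  have : (fun ν : ℂ => (a * ν) ^ n) = fun ν => a ^ n * ν ^ n := by funext ν; ring
  simp only [this]
  exact (isBigO_refl (fun ν : ℂ => ν ^ n) (𝓝 0)).const_mul_left _

private lemma mul_bigO_pow {f g : ℂ → ℂ} {a b n : ℕ} (hf : f =O[𝓝 0] fun z => z ^ a)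
    (hg : g =O[𝓝 0] fun z => z ^ b) (h : n ≤ a + b) :
    (fun z => f z * g z) =O[𝓝 0] fun z => z ^ n :=
  ((hf.mul hg).congr_right fun z => (pow_add z a b).symm).trans (pow_bigO_pow h)

private lemma tendsto_bigO_pow0 {f : ℂ → ℂ} {y : ℂ} (h : Tendsto f (𝓝 0) (𝓝 y)) :
    f =O[𝓝 0] fun z : ℂ => z ^ 0 :=
  (h.isBigO_one ℂ).congr_right fun z => (pow_zero z).symm

private lemma NminusK (p L : ℂ) :
    (fun ν : ℂ =>
      (Complex.exp (-(L * ν)) * p * ν ^ 2 *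
          (p * Complex.cos (p * ν) + L * Complex.sin (p * ν)) -
        Complex.sin (p * ν) ^ 2) -
        p ^ 2 * (-L ^ 2 / 2 - p ^ 2 / 6) * ν ^ 4)
      =O[𝓝 0] fun ν => ν ^ 5 := by
  have hE := expQuad L
  have hs := compScale p sinTaylor4
  have hc := compScale p cosTaylor4
  have hν2 : (fun ν : ℂ => ν ^ 2) =O[𝓝 0] fun ν => ν ^ 2 := isBigO_refl _ _
  -- T1
  have hC : Tendsto (fun ν : ℂ => p * (p * Complex.cos (p * ν) + L * Complex.sin (p * ν)))
      (𝓝 0) (𝓝 (p * (p * Complex.cos (p * 0) + L * Complex.sin (p * 0)))) :=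
    Continuous.tendsto (by fun_prop) 0
  have T1 : (fun ν : ℂ => (p * (p * Complex.cos (p * ν) + L * Complex.sin (p * ν))) *
      (ν ^ 2 * (Complex.exp (-(L * ν)) - (1 - L * ν + L ^ 2 * ν ^ 2 / 2))))
      =O[𝓝 0] fun ν => ν ^ 5 :=
    mul_bigO_pow (tendsto_bigO_pow0 hC) (mul_bigO_pow hν2 hE (le_refl 5)) (by norm_num)
  -- T2
  have hpE : Tendsto (fun ν : ℂ => p * (1 - L * ν + L ^ 2 * ν ^ 2 / 2)) (𝓝 0)
      (𝓝 (p * (1 - L * 0 + L ^ 2 * 0 ^ 2 / 2))) :=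
    Continuous.tendsto (by fun_prop) 0
  have hecs : (fun ν : ℂ => p * (Complex.cos (p * ν) - (1 - (p * ν) ^ 2 / 2)) +
      L * (Complex.sin (p * ν) - (p * ν - (p * ν) ^ 3 / 6))) =O[𝓝 0] fun ν => ν ^ 4 :=
    (hc.const_mul_left p).add (hs.const_mul_left L)
  have T2 : (fun ν : ℂ => (p * (1 - L * ν + L ^ 2 * ν ^ 2 / 2)) *
      (ν ^ 2 * (p * (Complex.cos (p * ν) - (1 - (p * ν) ^ 2 / 2)) +
        L * (Complex.sin (p * ν) - (p * ν - (p * ν) ^ 3 / 6)))))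
      =O[𝓝 0] fun ν => ν ^ 5 :=
    mul_bigO_pow (tendsto_bigO_pow0 hpE) (mul_bigO_pow (n := 5) hν2 hecs (by norm_num)) (by norm_num)
  -- T3
  have hq : Tendsto (fun ν : ℂ => L * p ^ 4 / 3 + L ^ 3 * p ^ 2 / 2 +
      ν * (-p ^ 6 / 36 - L ^ 2 * p ^ 4 / 12) + ν ^ 2 * (-(L ^ 3) * p ^ 4 / 12)) (𝓝 0)
      (𝓝 (L * p ^ 4 / 3 + L ^ 3 * p ^ 2 / 2 +
        0 * (-p ^ 6 / 36 - L ^ 2 * p ^ 4 / 12) + 0 ^ 2 * (-(L ^ 3) * p ^ 4 / 12))) :=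
    Continuous.tendsto (by fun_prop) 0
  have T3 : (fun ν : ℂ => ν ^ 5 * (L * p ^ 4 / 3 + L ^ 3 * p ^ 2 / 2 +
      ν * (-p ^ 6 / 36 - L ^ 2 * p ^ 4 / 12) + ν ^ 2 * (-(L ^ 3) * p ^ 4 / 12)))
      =O[𝓝 0] fun ν => ν ^ 5 :=
    mul_bigO_pow (isBigO_refl _ _) (tendsto_bigO_pow0 hq) (by norm_num)
  -- T4
  have hps : (fun ν : ℂ => Complex.sin (p * ν) + (p * ν - (p * ν) ^ 3 / 6))
      =O[𝓝 0] fun ν => ν ^ 1 := by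
    have h1 : (fun ν : ℂ => Complex.sin (p * ν) - (p * ν - (p * ν) ^ 3 / 6))
        =O[𝓝 0] (fun ν => ν ^ 1) := hs.trans (pow_bigO_pow (by norm_num))
    have h2 : (fun ν : ℂ => ν * (2 * p - p ^ 3 * ν ^ 2 / 3)) =O[𝓝 0] fun ν => ν ^ 1 := by
      have ht : Tendsto (fun ν : ℂ => 2 * p - p ^ 3 * ν ^ 2 / 3) (𝓝 0)
          (𝓝 (2 * p - p ^ 3 * 0 ^ 2 / 3)) :=
        Continuous.tendsto (by fun_prop) 0
      have := mul_bigO_pow (isBigO_refl (fun ν : ℂ => ν ^ 1) (𝓝 0)) (tendsto_bigO_pow0 ht)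
        (le_refl 1)
      exact this.congr_left fun ν => by ring
    exact (h1.add h2).congr_left fun ν => by ring
  have T4 : (fun ν : ℂ => -((Complex.sin (p * ν) + (p * ν - (p * ν) ^ 3 / 6)) *
      (Complex.sin (p * ν) - (p * ν - (p * ν) ^ 3 / 6)))) =O[𝓝 0] fun ν => ν ^ 5 :=
    (mul_bigO_pow hps hs (by norm_num)).neg_left
  refine (((T1.add T2).add T3).add T4).congr_left fun ν => ?_
  ring

private lemma mainLim (L : ℂ) :
    Tendsto (fun ν : ℂ =>
      Complex.exp (-ν * L) * ((Real.pi : ℂ) / Complex.sin ((Real.pi : ℂ) * ν)) *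
        ((Real.pi : ℂ) * (Complex.cos ((Real.pi : ℂ) * ν) / Complex.sin ((Real.pi : ℂ) * ν)) + L)
        - (ν ^ 2)⁻¹) (𝓝[≠] 0) (𝓝 (-L ^ 2 / 2 - (Real.pi : ℂ) ^ 2 / 6)) := by
  set p : ℂ := (Real.pi : ℂ) with hpdef
  have hp : p ≠ 0 := by
    simp only [hpdef, ne_eq, Complex.ofReal_eq_zero]
    exact Real.pi_ne_zero
  set K : ℂ := p ^ 2 * (-L ^ 2 / 2 - p ^ 2 / 6) with hKdef
  set N : ℂ → ℂ := fun ν =>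
    Complex.exp (-(L * ν)) * p * ν ^ 2 *
      (p * Complex.cos (p * ν) + L * Complex.sin (p * ν)) - Complex.sin (p * ν) ^ 2 with hNdef
  -- eventually sin (p ν) ≠ 0 and ν ≠ 0
  have hev : ∀ᶠ ν in 𝓝[≠] (0:ℂ), Complex.sin (p * ν) ≠ 0 ∧ ν ≠ 0 := by
    have h1 : ∀ᶠ ν in 𝓝[≠] (0:ℂ), ‖ν‖ < 1 := by
      apply eventually_nhdsWithin_of_eventually_nhds
      have := Metric.ball_mem_nhds (0:ℂ) one_pos
      filter_upwards [this] with ν hν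
      simpa [dist_zero_right] using hν
    filter_upwards [h1, self_mem_nhdsWithin] with ν hν hν0
    refine ⟨?_, hν0⟩
    intro hsin
    rcases Complex.sin_eq_zero_iff.mp hsin with ⟨k, hk⟩
    have hνk : ν = (k : ℂ) := by
      rw [← hpdef] at hk
      exact mul_left_cancel₀ hp (hk.trans (mul_comm (k : ℂ) p))
    rw [hνk] at hν hν0
    have : |(k : ℝ)| < 1 := by
      have h' : ‖((k : ℝ) : ℂ)‖ < 1 := by push_cast; exact_mod_cast hν
      rwa [Complex.norm_real, Real.norm_eq_abs] at h'
    have hk0 : k = 0 := by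
      exact_mod_cast Int.abs_lt_one_iff.mp (by exact_mod_cast this)
    exact hν0 (by simp [hk0])
  -- limit of N ν / ν ^ 4
  have hNlim : Tendsto (fun ν => N ν / ν ^ 4) (𝓝[≠] (0:ℂ)) (𝓝 K) := by
    have h1 : (fun ν : ℂ => N ν - K * ν ^ 4) =O[𝓝[≠] (0:ℂ)] fun ν => ν ^ 5 :=
      (NminusK p L).mono nhdsWithin_le_nhds
    have h2 : (fun ν : ℂ => (N ν - K * ν ^ 4) * (ν ^ 4)⁻¹) =O[𝓝[≠] (0:ℂ)]
        fun ν => ν ^ 5 * (ν ^ 4)⁻¹ := h1.mul (isBigO_refl _ _)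
    have heq : (fun ν : ℂ => ν ^ 5 * (ν ^ 4)⁻¹) =ᶠ[𝓝[≠] (0:ℂ)] fun ν => ν := by
      filter_upwards [self_mem_nhdsWithin] with ν hν
      have hν4 : (ν : ℂ) ^ 4 ≠ 0 := pow_ne_zero _ hν
      field_simp
    have h3 : Tendsto (fun ν : ℂ => (N ν - K * ν ^ 4) * (ν ^ 4)⁻¹) (𝓝[≠] (0:ℂ)) (𝓝 0) :=
      (h2.trans heq.isBigO).trans_tendsto (tendsto_id.mono_left nhdsWithin_le_nhds)
    have h4 : Tendsto (fun ν : ℂ => (N ν - K * ν ^ 4) * (ν ^ 4)⁻¹ + K) (𝓝[≠] (0:ℂ))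
        (𝓝 (0 + K)) := h3.add tendsto_const_nhds
    rw [zero_add] at h4
    refine h4.congr' ?_
    filter_upwards [self_mem_nhdsWithin] with ν hν
    have hν4 : (ν : ℂ) ^ 4 ≠ 0 := pow_ne_zero _ hν
    rw [sub_mul, mul_assoc K, mul_inv_cancel₀ hν4, div_eq_mul_inv]; ring
  -- limit of ν / sin (p ν)
  have hslope : Tendsto (fun ν : ℂ => Complex.sin (p * ν) / ν) (𝓝[≠] (0:ℂ)) (𝓝 p) := by
    have hd : HasDerivAt (fun ν : ℂ => Complex.sin (p * ν)) p 0 := by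
      have := ((Complex.hasDerivAt_sin (p * 0)).comp 0
        ((hasDerivAt_id (0:ℂ)).const_mul p))
      have h' : HasDerivAt (Complex.sin ∘ HMul.hMul p) p 0 := by simpa using this
      exact h'
    rw [hasDerivAt_iff_tendsto_slope] at hd
    refine hd.congr' ?_
    filter_upwards [self_mem_nhdsWithin] with ν hν
    simp [slope_def_field, hν]
  have hinv : Tendsto (fun ν : ℂ => ν / Complex.sin (p * ν)) (𝓝[≠] (0:ℂ)) (𝓝 p⁻¹) := by
    have := hslope.inv₀ hp
    refine this.congr' ?_
    filter_upwards [hev] with ν hν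
    rw [inv_div]
  have hfin : Tendsto (fun ν : ℂ => N ν / ν ^ 4 * (ν / Complex.sin (p * ν)) ^ 2)
      (𝓝[≠] (0:ℂ)) (𝓝 (K * p⁻¹ ^ 2)) := hNlim.mul (hinv.pow 2)
  have hKval : K * p⁻¹ ^ 2 = -L ^ 2 / 2 - p ^ 2 / 6 := by
    rw [hKdef]; field_simp
  rw [hKval] at hfin
  refine hfin.congr' ?_
  filter_upwards [hev] with ν hν
  obtain ⟨hsν, hν0⟩ := hν
  rw [show -ν * L = -(L * ν) by ring]
  simp only [hNdef]
  generalize Complex.sin (p * ν) = s at hsν ⊢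
  field_simp

end AuxDeltaOne

section MainDeltaOne
open Asymptotics Bornology
open scoped ENNReal NNReal

/-- For fixed `ω ≠ 0` with `|Arg ω| < π`, the singular factor
`Δ₁(ν,ω) = ω^{-ν} (π/sin(πν)) (π cot(πν) + Log ω)` of the Stieltjes transform with a
single logarithm is meromorphic in `ν` with a pole at `ν = 0`, and its regularized
limit as `ν → 0` — the constant coefficient `c 0` of its Laurent expansion about
`ν = 0` — equals `−(Log ω)²/2 − π²/6`. -/
theorem regularized_limit_Delta_one (ω : ℂ) (hω : ω ≠ 0) (harg : |ω.arg| < Real.pi)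
    (r : ℝ) (hr : 0 < r) (c : ℤ → ℂ)
    (hc : ∀ ν : ℂ, ν ≠ 0 → ‖ν‖ < r →
      HasSum (fun k : ℤ => c k * ν ^ k)
        (Complex.exp (-ν * Complex.log ω) *
          ((Real.pi : ℂ) / Complex.sin ((Real.pi : ℂ) * ν)) *
          ((Real.pi : ℂ) *
              (Complex.cos ((Real.pi : ℂ) * ν) / Complex.sin ((Real.pi : ℂ) * ν)) +
            Complex.log ω))) :
    c 0 = -(Complex.log ω) ^ 2 / 2 - (Real.pi : ℂ) ^ 2 / 6 := by
  set L : ℂ := Complex.log ω with hLdef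
  set F : ℂ → ℂ := fun ν => Complex.exp (-ν * L) *
      ((Real.pi : ℂ) / Complex.sin ((Real.pi : ℂ) * ν)) *
      ((Real.pi : ℂ) * (Complex.cos ((Real.pi : ℂ) * ν) / Complex.sin ((Real.pi : ℂ) * ν)) + L)
    with hFdef
  -- split the bilateral sum
  have key : ∀ ν : ℂ, ν ≠ 0 → ‖ν‖ < r →
      (Summable fun n : ℕ => c n * ν ^ (n : ℤ)) ∧
      (Summable fun n : ℕ => c (-(n + 1)) * ν ^ (-(n + 1 : ℕ) : ℤ)) ∧
      F ν = (∑' n : ℕ, c n * ν ^ (n : ℤ)) + ∑' n : ℕ, c (-(n + 1)) * ν ^ (-(n + 1 : ℕ) : ℤ) := by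
    intro ν h1 h2
    have hsum : HasSum (fun k : ℤ => c k * ν ^ k) (F ν) := hc ν h1 h2
    have hs := hsum.summable
    have hplus : Summable fun n : ℕ => c n * ν ^ (n : ℤ) :=
      hs.comp_injective (fun a b h => by exact_mod_cast h)
    have hminus : Summable fun n : ℕ => c (-(n + 1)) * ν ^ (-(n + 1 : ℕ) : ℤ) :=
      hs.comp_injective (i := fun n : ℕ => (-(n + 1 : ℕ) : ℤ)) (fun a b h => by
        simp only at h; omega)
    refine ⟨hplus, hminus, ?_⟩
    exact hsum.unique (HasSum.of_nat_of_neg_add_one hplus.hasSum hminus.hasSum)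
  -- the nonnegative-power part: a power series with positive radius
  set P : FormalMultilinearSeries ℂ ℂ ℂ :=
    FormalMultilinearSeries.ofScalars ℂ (fun n : ℕ => c n) with hPdef
  have hrhalf : (0 : ℝ) < r / 2 := by linarith
  have hν₀ : ((r / 2 : ℝ) : ℂ) ≠ 0 := by
    simp only [ne_eq, Complex.ofReal_eq_zero]; linarith
  have hν₀norm : ‖((r / 2 : ℝ) : ℂ)‖ < r := by
    rw [Complex.norm_real, Real.norm_eq_abs, abs_of_pos hrhalf]; linarith
  obtain ⟨hplus₀, -, -⟩ := key ((r / 2 : ℝ) : ℂ) hν₀ hν₀norm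
  obtain ⟨C, hC⟩ : ∃ C : ℝ, ∀ n : ℕ, ‖c n * ((r / 2 : ℝ) : ℂ) ^ (n : ℤ)‖ ≤ C := by
    have ht : Tendsto (fun n : ℕ => ‖c n * ((r / 2 : ℝ) : ℂ) ^ (n : ℤ)‖) atTop (𝓝 0) := by
      simpa using hplus₀.tendsto_atTop_zero.norm
    obtain ⟨C, hC⟩ := ht.bddAbove_range
    exact ⟨C, fun n => hC (Set.mem_range_self n)⟩
  have hPrad : ((r / 2 : ℝ).toNNReal : ℝ≥0∞) ≤ P.radius := by
    apply P.le_radius_of_bound C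
    intro n
    have h1 : ‖P n‖ = ‖c n‖ := FormalMultilinearSeries.ofScalars_norm _ _ _
    have h2 : (((r / 2 : ℝ).toNNReal : ℝ)) = r / 2 := Real.coe_toNNReal _ hrhalf.le
    rw [h1, h2]
    calc ‖c n‖ * (r / 2) ^ n = ‖c n * ((r / 2 : ℝ) : ℂ) ^ (n : ℤ)‖ := by
          rw [norm_mul, zpow_natCast, norm_pow, Complex.norm_real, Real.norm_eq_abs,
            abs_of_pos hrhalf]
      _ ≤ C := hC n
  have hPpos : 0 < P.radius := by
    refine lt_of_lt_of_le ?_ hPrad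
    simpa using hrhalf
  have hPval : ∀ ν : ℂ, ‖ν‖ < r / 2 → P.sum ν = ∑' n : ℕ, c n * ν ^ (n : ℤ) := by
    intro ν hν
    have hmem : ν ∈ EMetric.ball (0 : ℂ) P.radius := by
      refine lt_of_lt_of_le ?_ hPrad
      rw [edist_zero_right]
      have h' : ‖ν‖₊ < (r / 2).toNNReal := by
        rw [← NNReal.coe_lt_coe, coe_nnnorm, Real.coe_toNNReal _ hrhalf.le]
        exact hν
      exact_mod_cast h'
    have := (P.hasSum hmem).tsum_eq
    rw [← this]
    refine tsum_congr fun n => ?_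
    rw [hPdef, FormalMultilinearSeries.ofScalars_apply_eq, smul_eq_mul, zpow_natCast]
  have hP0 : P.sum 0 = c 0 := by
    have hmem : (0:ℂ) ∈ Metric.eball (0 : ℂ) P.radius := by
      rw [EMetric.mem_ball, edist_self]; exact hPpos
    have := (P.hasSum hmem).tsum_eq
    rw [← this]
    rw [tsum_eq_single 0 (fun n hn => ?_)]
    · rw [hPdef, FormalMultilinearSeries.ofScalars_apply_eq, smul_eq_mul, pow_zero, mul_one]
      norm_num
    · rw [hPdef, FormalMultilinearSeries.ofScalars_apply_eq, smul_eq_mul,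
        zero_pow hn, mul_zero]
  have hSplusLim : Tendsto (fun ν : ℂ => ∑' n : ℕ, c n * ν ^ (n : ℤ)) (𝓝[≠] 0) (𝓝 (c 0)) := by
    have hcont : ContinuousAt P.sum 0 :=
      ((FormalMultilinearSeries.continuousOn (p := P)).continuousAt (EMetric.ball_mem_nhds 0 hPpos))
    have h1 : Tendsto P.sum (𝓝[≠] (0:ℂ)) (𝓝 (c 0)) := by
      rw [← hP0]
      exact hcont.continuousWithinAt.tendsto
    refine h1.congr' ?_
    have h2 : ∀ᶠ ν in 𝓝[≠] (0:ℂ), ‖ν‖ < r / 2 := by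
      apply eventually_nhdsWithin_of_eventually_nhds
      filter_upwards [Metric.ball_mem_nhds (0:ℂ) hrhalf] with ν hν
      simpa [dist_zero_right] using hν
    filter_upwards [h2] with ν hν
    exact hPval ν hν
  -- the negative-power part: an entire function
  set b : ℕ → ℂ := fun n => if n = 0 then 0 else c (-(n : ℤ)) with hbdef
  set Q : FormalMultilinearSeries ℂ ℂ ℂ := FormalMultilinearSeries.ofScalars ℂ b with hQdef
  have hQrad : Q.radius = ⊤ := by
    apply ENNReal.eq_top_of_forall_nnreal_le
    intro R
    set t : ℝ := min (r / 2) (1 / ((R : ℝ) + 1)) with htdef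
    have htpos : 0 < t := lt_min hrhalf (by positivity)
    have ht1 : ((t : ℝ) : ℂ) ≠ 0 := by
      simp only [ne_eq, Complex.ofReal_eq_zero]; exact htpos.ne'
    have ht2 : ‖((t : ℝ) : ℂ)‖ < r := by
      rw [Complex.norm_real, Real.norm_eq_abs, abs_of_pos htpos]
      exact lt_of_le_of_lt (min_le_left _ _) (by linarith)
    obtain ⟨-, hminus₁, -⟩ := key ((t : ℝ) : ℂ) ht1 ht2
    obtain ⟨C, hC⟩ : ∃ C : ℝ, ∀ n : ℕ, ‖c (-(n + 1)) * ((t : ℝ) : ℂ) ^ (-(n + 1 : ℕ) : ℤ)‖ ≤ C := by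
      have ht : Tendsto (fun n : ℕ => ‖c (-(n + 1)) * ((t : ℝ) : ℂ) ^ (-(n + 1 : ℕ) : ℤ)‖)
          atTop (𝓝 0) := by
        simpa using hminus₁.tendsto_atTop_zero.norm
      obtain ⟨C, hC⟩ := ht.bddAbove_range
      exact ⟨C, fun n => hC (Set.mem_range_self n)⟩
    have hC0 : (0 : ℝ) ≤ C := le_trans (norm_nonneg _) (hC 0)
    apply Q.le_radius_of_bound C
    intro n
    have hQn : ‖Q n‖ = ‖b n‖ := FormalMultilinearSeries.ofScalars_norm _ _ _
    rw [hQn]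
    match n with
    | 0 => simpa [hbdef] using hC0
    | (m + 1) =>
      have hbm : ‖b (m + 1)‖ = ‖c (-(m + 1))‖ := by
        simp [hbdef]
      rw [hbm]
      have hnorm : ‖c (-(m + 1)) * ((t : ℝ) : ℂ) ^ (-(m + 1 : ℕ) : ℤ)‖
          = ‖c (-(m + 1))‖ * (t ^ (m + 1))⁻¹ := by
        rw [norm_mul, zpow_neg, norm_inv, zpow_natCast, norm_pow, Complex.norm_real,
          Real.norm_eq_abs, abs_of_pos htpos]
      have hle : ‖c (-(m + 1))‖ ≤ C * t ^ (m + 1) := by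
        have h1 := hC m
        rw [hnorm] at h1
        have h2 : (0:ℝ) < t ^ (m + 1) := by positivity
        calc ‖c (-(m + 1))‖ = ‖c (-(m + 1))‖ * (t ^ (m + 1))⁻¹ * t ^ (m + 1) := by
              field_simp
          _ ≤ C * t ^ (m + 1) := by
              apply mul_le_mul_of_nonneg_right h1 h2.le
      calc ‖c (-(m + 1))‖ * (R : ℝ) ^ (m + 1) ≤ C * t ^ (m + 1) * (R : ℝ) ^ (m + 1) := by
            apply mul_le_mul_of_nonneg_right hle (by positivity)
        _ = C * (t * (R : ℝ)) ^ (m + 1) := by rw [mul_pow]; ring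
        _ ≤ C * 1 := by
            apply mul_le_mul_of_nonneg_left ?_ hC0
            apply pow_le_one₀ (by positivity)
            have h3 : t ≤ 1 / ((R : ℝ) + 1) := min_le_right _ _
            calc t * (R : ℝ) ≤ (1 / ((R : ℝ) + 1)) * (R : ℝ) := by
                  apply mul_le_mul_of_nonneg_right h3 R.coe_nonneg
              _ ≤ 1 := by
                  rw [div_mul_eq_mul_div, mul_comm]
                  apply div_le_one_of_le₀ (by linarith) (by positivity)
        _ = C := mul_one C
  have hQon : HasFPowerSeriesOnBall Q.sum Q 0 ⊤ := by
    have := Q.hasFPowerSeriesOnBall (by rw [hQrad]; exact ENNReal.zero_lt_top)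
    rwa [hQrad] at this
  have hQdiff : Differentiable ℂ Q.sum := fun w =>
    (hQon.differentiableOn.differentiableAt
      (IsOpen.mem_nhds EMetric.isOpen_ball (by
        rw [EMetric.mem_ball, edist_zero_right]; exact lt_top_iff_ne_top.mpr ENNReal.coe_ne_top)))
  have hQmem : ∀ w : ℂ, w ∈ Metric.eball (0 : ℂ) Q.radius := by
    intro w
    rw [EMetric.mem_ball, edist_zero_right, hQrad]
    exact lt_top_iff_ne_top.mpr ENNReal.coe_ne_top
  have hQ0 : Q.sum 0 = 0 := by
    have := (Q.hasSum (hQmem 0)).tsum_eq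
    rw [← this]
    rw [tsum_eq_single 0 (fun n hn => ?_)]
    · rw [hQdef, FormalMultilinearSeries.ofScalars_apply_eq, smul_eq_mul, pow_zero, mul_one]
      simp [hbdef]
    · rw [hQdef, FormalMultilinearSeries.ofScalars_apply_eq, smul_eq_mul,
        zero_pow hn, mul_zero]
  have hQval : ∀ ν : ℂ, ν ≠ 0 →
      (∑' n : ℕ, c (-(n + 1)) * ν ^ (-(n + 1 : ℕ) : ℤ)) = Q.sum ν⁻¹ := by
    intro ν hν
    have hsum : HasSum (fun n : ℕ => b n * (ν⁻¹) ^ n) (Q.sum ν⁻¹) := by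
      have := Q.hasSum (hQmem ν⁻¹)
      refine this.congr_fun fun n => ?_
      rw [hQdef, FormalMultilinearSeries.ofScalars_apply_eq, smul_eq_mul]
    have hb0 : b 0 * (ν⁻¹) ^ 0 = 0 := by simp [hbdef]
    have hshift : HasSum (fun n : ℕ => b (n + 1) * (ν⁻¹) ^ (n + 1)) (Q.sum ν⁻¹) := by
      refine (hasSum_nat_add_iff (f := fun n : ℕ => b n * (ν⁻¹) ^ n) 1).mpr ?_
      simpa [hbdef] using hsum
    have heq : (fun n : ℕ => b (n + 1) * (ν⁻¹) ^ (n + 1))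
        = fun n : ℕ => c (-(n + 1)) * ν ^ (-(n + 1 : ℕ) : ℤ) := by
      funext n
      rw [hbdef]
      simp only [Nat.succ_ne_zero, if_false]
      rw [zpow_neg, zpow_natCast, inv_pow]
      norm_num
    rw [heq] at hshift
    exact hshift.tsum_eq
  -- the auxiliary entire function h w = Q.sum w - w ^ 2
  set d : ℂ := (-L ^ 2 / 2 - (Real.pi : ℂ) ^ 2 / 6) - c 0 with hddef
  set h : ℂ → ℂ := fun w => Q.sum w - w ^ 2 with hhdef
  have hdiff : Differentiable ℂ h := hQdiff.sub (differentiable_pow 2)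
  have htend₁ : Tendsto (fun ν : ℂ => h ν⁻¹) (𝓝[≠] (0:ℂ)) (𝓝 d) := by
    have hmain := mainLim L
    have hsub : Tendsto (fun ν : ℂ => (F ν - (ν ^ 2)⁻¹) - ∑' n : ℕ, c n * ν ^ (n : ℤ))
        (𝓝[≠] (0:ℂ)) (𝓝 d) := by
      rw [hddef]
      exact (mainLim L).sub hSplusLim
    refine hsub.congr' ?_
    have h2 : ∀ᶠ ν in 𝓝[≠] (0:ℂ), ‖ν‖ < r / 2 := by
      apply eventually_nhdsWithin_of_eventually_nhds
      filter_upwards [Metric.ball_mem_nhds (0:ℂ) hrhalf] with ν hν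
      simpa [dist_zero_right] using hν
    filter_upwards [h2, self_mem_nhdsWithin] with ν hν hν0
    have hν0' : (ν : ℂ) ≠ 0 := hν0
    have hsplit := (key ν hν0' (lt_trans hν (by linarith))).2.2
    rw [hhdef]
    simp only
    rw [← hQval ν hν0', inv_pow ν 2]
    rw [hsplit]
    ring
  have htend₂ : Tendsto h (cobounded ℂ) (𝓝 d) := by
    have hi : Tendsto (fun w : ℂ => w⁻¹) (cobounded ℂ) (𝓝[≠] (0:ℂ)) :=
      tendsto_inv₀_cobounded'
    have hcomp : Tendsto (fun w : ℂ => h (w⁻¹)⁻¹) (cobounded ℂ) (𝓝 d) := htend₁.comp hi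
    refine hcomp.congr' ?_
    filter_upwards [eventually_cobounded_le_norm (1:ℝ)] with w hw
    have hw0 : w ≠ 0 := by
      intro h0
      rw [h0] at hw
      norm_num at hw
    rw [inv_inv]
  -- h is bounded
  have hbound : IsBounded (Set.range h) := by
    have hev2 : ∀ᶠ w in cobounded ℂ, ‖h w‖ ≤ ‖d‖ + 1 := by
      have := Metric.tendsto_nhds.mp htend₂ 1 one_pos
      filter_upwards [this] with w hw
      have : ‖h w - d‖ < 1 := by rwa [dist_eq_norm] at hw
      calc ‖h w‖ = ‖h w - d + d‖ := by ring_nf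
        _ ≤ ‖h w - d‖ + ‖d‖ := norm_add_le _ _
        _ ≤ ‖d‖ + 1 := by linarith
    have hSc : IsBounded {w : ℂ | ‖h w‖ ≤ ‖d‖ + 1}ᶜ := by
      rw [Bornology.isBounded_def, compl_compl]
      exact hev2
    have hsubset : Set.range h ⊆
        h '' closure ({w : ℂ | ‖h w‖ ≤ ‖d‖ + 1}ᶜ) ∪ Metric.closedBall 0 (‖d‖ + 1) := by
      rintro x ⟨w, rfl⟩
      by_cases hw : ‖h w‖ ≤ ‖d‖ + 1
      · right
        simpa [Metric.mem_closedBall, dist_zero_right] using hw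
      · left
        exact Set.mem_image_of_mem h (subset_closure hw)
    refine IsBounded.subset ?_ hsubset
    refine IsBounded.union ?_ Metric.isBounded_closedBall
    exact (hSc.isCompact_closure.image hdiff.continuous).isBounded
  -- Liouville: h is constant, hence h ≡ h 0 = 0 and d = 0
  have hconst : ∀ w : ℂ, h w = 0 := by
    intro w
    have := hdiff.apply_eq_apply_of_bounded hbound w 0
    rw [this, hhdef]
    simp [hQ0]
  have hd0 : d = 0 := by
    have h1 : Tendsto h (cobounded ℂ) (𝓝 0) := by
      have : h = fun _ => (0:ℂ) := funext hconst
      rw [this]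
      exact tendsto_const_nhds
    exact tendsto_nhds_unique htend₂ h1
  have : c 0 = -L ^ 2 / 2 - (Real.pi : ℂ) ^ 2 / 6 := by
    have := hddef ▸ hd0
    linear_combination -this
  exact this


end MainDeltaOne
end
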